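/- Let W be a finite-dimensional real vector space, D ⊆ W a subspace, and ω a non-degenerate skew-symmetric bilinear form on D. Then there exists a unique bivector π ∈ Λ²W with im(π♯) = D such that for all ξ, η ∈ W*, ω(π♯ξ, π♯η) = π(ξ, η). Explicitly, π♯ = i ∘ ω♭⁻¹ ∘ i*, where i : D → W is the inclusion, i* : W* → D* its transpose, and ω♭ : D → D* the isomorphism induced by ω. -/
import Mathlib

open Module LinearMap

/-- Let `W` be a finite-dimensional real vector space, `D ⊆ W` a subspace and
`ω` a non-degenerate skew-symmetric bilinear form on `D`.  Then there is a *unique* bivector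
`π ∈ Λ²W` — modeled by its contraction map `π♯ : W* → W`, which is the datum of a skew-adjoint
linear map (`⟨η, π♯ξ⟩ = π(ξ,η) = -π(η,ξ) = -⟨ξ, π♯η⟩`) — such that `im π♯ = D` and
`ω(π♯ξ, π♯η) = π(ξ,η)` for all `ξ, η ∈ W*`.  Explicitly, `π♯ = i ∘ ω♭⁻¹ ∘ i*` where
`i : D → W` is the inclusion, `i*` its transpose and `ω♭ : D → D*` the isomorphism induced by
`ω`; this is rendered by the last clause `ω♭(π♯ξ) = -i*(ξ)`, i.e. `ω(π♯ξ, d) = -ξ(d)` for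
`d ∈ D` (the sign being forced by the conventions `⟨η,π♯ξ⟩ = π(ξ,η)`, `ω♭(v) = ω(v,·)`). -/
theorem bivector_from_subspace_and_form_existsUnique
    (W : Type*) [AddCommGroup W] [Module ℝ W] [FiniteDimensional ℝ W]
    (D : Submodule ℝ W) (ω : D →ₗ[ℝ] D →ₗ[ℝ] ℝ)
    (hskew : ∀ v w : D, ω v w = -(ω w v))
    (hnondeg : ∀ v : D, (∀ w : D, ω v w = 0) → v = 0) :
    ∃! sharp : Module.Dual ℝ W →ₗ[ℝ] W,
      (∀ ξ η : Module.Dual ℝ W, η (sharp ξ) = -(ξ (sharp η))) ∧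
      LinearMap.range sharp = D ∧
      (∀ (ξ η : Module.Dual ℝ W) (hξ : sharp ξ ∈ D) (hη : sharp η ∈ D),
          ω ⟨sharp ξ, hξ⟩ ⟨sharp η, hη⟩ = η (sharp ξ)) ∧
      (∀ (ξ : Module.Dual ℝ W) (hξ : sharp ξ ∈ D) (d : D),
          ω ⟨sharp ξ, hξ⟩ d = -(ξ (d : W))) := by
  have hinj : Function.Injective ω := by
    rw [injective_iff_map_eq_zero]
    intro v hv
    exact hnondeg v (fun w => by rw [hv]; rfl)
  have hdim : finrank ℝ D = finrank ℝ (Module.Dual ℝ D) :=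
    (Subspace.dual_finrank_eq).symm
  let e : D ≃ₗ[ℝ] Module.Dual ℝ D := LinearMap.linearEquivOfInjective ω hinj hdim
  have he : ∀ v : D, e v = ω v := fun v => rfl
  -- restriction map i* : W* → D*
  let r : Module.Dual ℝ W →ₗ[ℝ] Module.Dual ℝ D := D.subtype.dualMap
  have hrsurj : Function.Surjective r :=
    LinearMap.dualMap_surjective_of_injective D.injective_subtype
  let f : Module.Dual ℝ W →ₗ[ℝ] D := (e.symm.toLinearMap) ∘ₗ (-r)
  let sharp : Module.Dual ℝ W →ₗ[ℝ] W := D.subtype ∘ₗ f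
  have hmem : ∀ ξ, sharp ξ ∈ D := fun ξ => (f ξ).2
  have hval : ∀ ξ, (⟨sharp ξ, hmem ξ⟩ : D) = f ξ := fun ξ => rfl
  -- key: ω (f ξ) d = - ξ d
  have key : ∀ (ξ : Module.Dual ℝ W) (d : D), ω (f ξ) d = -(ξ (d : W)) := by
    intro ξ d
    have : ω (f ξ) = -r ξ := by
      have := e.apply_symm_apply (-r ξ)
      rw [he] at this
      exact this
    rw [this]
    simp [r]
  refine ⟨sharp, ⟨?_, ?_, ?_, ?_⟩, ?_⟩
  · intro ξ η
    have h1 := key ξ (f η)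
    have h2 := key η (f ξ)
    have h3 := hskew (f ξ) (f η)
    show η ((f ξ : D) : W) = -(ξ ((f η : D) : W))
    linarith
  · apply le_antisymm
    · rintro _ ⟨ξ, rfl⟩; exact hmem ξ
    · intro d hd
      obtain ⟨ξ, hξ⟩ := hrsurj (e ⟨d, hd⟩)
      refine ⟨-ξ, ?_⟩
      have : f (-ξ) = ⟨d, hd⟩ := by
        simp only [f, LinearMap.comp_apply, map_neg, neg_neg, LinearMap.neg_apply]
        exact (by rw [hξ]; exact e.symm_apply_apply _)
      show D.subtype (f (-ξ)) = d
      rw [this]; rfl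
  · intro ξ η hξ hη
    have e1 : (⟨sharp ξ, hξ⟩ : D) = f ξ := Subtype.ext rfl
    have e2 : (⟨sharp η, hη⟩ : D) = f η := Subtype.ext rfl
    rw [e1, e2, hskew, key, neg_neg]
    rfl
  · intro ξ hξ d
    have e1 : (⟨sharp ξ, hξ⟩ : D) = f ξ := Subtype.ext rfl
    rw [e1]
    exact key ξ d
  · -- uniqueness
    intro s ⟨_, hrange, _, hlast⟩
    have hsmem : ∀ ξ, s ξ ∈ D := fun ξ => hrange ▸ LinearMap.mem_range_self s ξ
    ext ξ
    have h1 := hlast ξ (hsmem ξ)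
    have h2 : ∀ d : D, ω (⟨s ξ, hsmem ξ⟩ : D) d = ω (f ξ) d := fun d => by
      rw [h1 d, key]
    have : (⟨s ξ, hsmem ξ⟩ : D) = f ξ := hinj (by ext d; exact h2 d)
    calc s ξ = ((⟨s ξ, hsmem ξ⟩ : D) : W) := rfl
    _ = ((f ξ : D) : W) := by rw [this]
    _ = sharp ξ := rfl
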